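/- arXiv:1410.8329 — 2 statements merged into one kernel-verified Lean document; each statement's English description precedes it below -/
import Mathlib

section
/- Let λ = (λ_1,...,λ_{j-1}) and μ = (μ_{j+2},...,μ_ℓ) be integer vectors, and let D be a valid set of pairs such that (j,j+1) ∉ D and, for each h < j, (h,j) ∈ D if and only if (h,j+1) ∈ D. Then for any integers r and s, T(D, (λ,r,s,μ)) = −T(D, (λ,s−1,r+1,μ)) in ℤ[c,t]. In particular, if an integer sequence λ satisfies λ_{j+1} = λ_j + 1 (and D satisfies the above hypotheses at position j), then T(D, λ) = 0. -/
open scoped Classical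

noncomputable section

/-- The polynomial ring ℤ[c,t]: variables `Sum.inl p` (p ≥ 1) are the `c` variables,
variables `Sum.inr i` (i ≥ 1) are the `t` variables. -/
abbrev P : Type := MvPolynomial (ℕ ⊕ ℕ) ℤ

/-- t_r, with the convention t_r = t_{-r} for r < 0. -/
def tvar (r : ℤ) : P := MvPolynomial.X (Sum.inr r.natAbs)

/-- c_p, with c_0 = 1 and c_p = 0 for p < 0. -/
def cvar (p : ℤ) : P :=
  if p = 0 then 1 else if p < 0 then 0 else MvPolynomial.X (Sum.inl p.toNat)

def negT (i : ℕ) : P := - MvPolynomial.X (Sum.inr i)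

/-- e_j(-t_1,…,-t_m). -/
def esymNT (m j : ℕ) : P :=
  ∑ S ∈ Finset.powersetCard j (Finset.Icc 1 m), ∏ i ∈ S, negT i

/-- h_j(-t_1,…,-t_m). -/
def hsymNT (m j : ℕ) : P :=
  ∑ f ∈ (Finset.Icc 1 m).sym j, (Multiset.map negT (f : Multiset ℕ)).prod

/-- h^r_j(-t): complete homogeneous for r ≥ 0, elementary in |r| variables for r < 0,
and 0 for j < 0. -/
def hNT (r j : ℤ) : P :=
  if j < 0 then 0
  else if 0 ≤ r then hsymNT r.toNat j.toNat
  else esymNT (-r).toNat j.toNat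

/-- c^r_p = Σ_{j=0}^p c_{p-j} h^r_j(-t). -/
def cc (r p : ℤ) : P :=
  ∑ j ∈ Finset.range (p.toNat + 1), cvar (p - j) * hNT r j

/-- c^β_α = Π_i c^{β_i}_{α_i} (sequences are indexed from 1; entry 0 is inert since c^r_0 = 1). -/
def cmon (β α : ℕ → ℤ) : P := ∏ᶠ i, cc (β i) (α i)

/-- The sequence obtained from α by the raising-operator monomial Π_{(i,j)} R_{ij}^{n(i,j)}. -/
def raiseSeq (n : (ℕ × ℕ) →₀ ℕ) (α : ℕ → ℤ) : ℕ → ℤ := fun m =>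
  α m + ∑ p ∈ n.support, (n p : ℤ) * ((if p.1 = m then 1 else 0) - (if p.2 = m then 1 else 0))

/-- Coefficient of R^m in the factor attached to one pair: (1-R) if `a` only,
(1+R)⁻¹ if `b` only, (1-R)(1+R)⁻¹ if both, 1 if neither (only evaluated at m ≥ 1). -/
def pairCoeff (a b : Prop) (m : ℕ) : ℤ :=
  if a then (if b then 2 * (-1 : ℤ)^m else if m ≤ 1 then (-1 : ℤ)^m else 0)
  else (if b then (-1 : ℤ)^m else 0)

def roCoeff (A B : Set (ℕ × ℕ)) (n : (ℕ × ℕ) →₀ ℕ) : ℤ :=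
  ∏ p ∈ n.support, pairCoeff (p ∈ A) (p ∈ B) (n p)

/-- Apply the raising operator expression Π_{p∈A}(1-R_p) · Π_{p∈B}(1+R_p)⁻¹ to c^β_α. -/
def applyRO (A B : Set (ℕ × ℕ)) (β α : ℕ → ℤ) : P :=
  ∑ᶠ n : (ℕ × ℕ) →₀ ℕ, (roCoeff A B n) • cmon β (raiseSeq n α)

/-- The set Δ° of all pairs (i,j) with 1 ≤ i < j. -/
def Upper : Set (ℕ × ℕ) := {p | 1 ≤ p.1 ∧ p.1 < p.2}

/-- A valid set of pairs: a finite order ideal of Δ°. -/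
def ValidPairs (D : Set (ℕ × ℕ)) : Prop :=
  D ⊆ Upper ∧ D.Finite ∧
    ∀ p ∈ D, ∀ q ∈ Upper, q.1 ≤ p.1 → q.2 ≤ p.2 → q ∈ D

/-- a_j(D) = #{i < j : (i,j) ∉ D}. -/
def aD (D : Set (ℕ × ℕ)) (j : ℕ) : ℕ :=
  ((Finset.Ico 1 j).filter (fun i => (i, j) ∉ D)).card

/-- γ_j(D,μ) = k + 1 - μ_j + a_j(D). -/
def gammaSeq (k : ℕ) (D : Set (ℕ × ℕ)) (μ : ℕ → ℤ) (j : ℕ) : ℤ :=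
  (k : ℤ) + 1 - μ j + aD D j

/-- T(D,μ) = R^D c^{γ(D,μ)}_μ, where R^D = Π_{i<j}(1-R_{ij}) Π_{(i,j)∈D}(1+R_{ij})⁻¹. -/
def Tpol (k : ℕ) (D : Set (ℕ × ℕ)) (μ : ℕ → ℤ) : P :=
  applyRO Upper D (gammaSeq k D μ) μ

def FinSupp (α : ℕ → ℤ) : Prop := ∃ N, ∀ m, N ≤ m → α m = 0

/-- Partitions, as integer sequences indexed from 1 (entry 0 is 0). -/
def IsPartition (lam : ℕ → ℤ) : Prop :=
  lam 0 = 0 ∧ (∀ i, 1 ≤ i → 0 ≤ lam i) ∧ (∀ i, 1 ≤ i → lam (i+1) ≤ lam i) ∧ FinSupp lam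

/-- k-strict partitions: parts greater than k are distinct. -/
def IsKStrict (k : ℕ) (lam : ℕ → ℤ) : Prop :=
  IsPartition lam ∧ ∀ i, 1 ≤ i → (k : ℤ) < lam i → lam (i+1) < lam i

/-- C(λ) = {(i,j) : 1 ≤ i < j, λ_i + λ_j > 2k + j - i}. -/
def Cset (k : ℕ) (lam : ℕ → ℤ) : Set (ℕ × ℕ) :=
  {p | 1 ≤ p.1 ∧ p.1 < p.2 ∧ 2*(k:ℤ) + (p.2:ℤ) - (p.1:ℤ) < lam p.1 + lam p.2}

/-- β_j(λ) = k + 1 - λ_j + #{i < j : (i,j) ∉ C(λ)}. -/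
def betaSeq (k : ℕ) (lam : ℕ → ℤ) (j : ℕ) : ℤ :=
  (k : ℤ) + 1 - lam j + ((Finset.Ico 1 j).filter (fun i => (i, j) ∉ Cset k lam)).card

/-- The double theta polynomial Θ_λ(c|t) = R^λ c^{β(λ)}_λ. -/
def Theta (k : ℕ) (lam : ℕ → ℤ) : P :=
  applyRO Upper (Cset k lam) (betaSeq k lam) lam

def zeroSeq : ℕ → ℤ := fun _ => 0

/-- The single theta polynomial Θ_λ(c) = R^λ c_λ. -/
def ThetaSingle (k : ℕ) (lam : ℕ → ℤ) : P :=
  applyRO Upper (Cset k lam) zeroSeq lam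

/-- The ideal generated by I^{(k)} in ℤ[c,t]. -/
def Ik (k : ℕ) : Ideal P :=
  Ideal.span {x | ∃ p : ℕ, k < p ∧
    x = cvar (p:ℤ) * cvar (p:ℤ)
      + 2 * ∑ i ∈ Finset.Icc 1 p, (-1 : P)^i * (cvar ((p : ℤ) + i) * cvar ((p : ℤ) - i))}

/-- ℤ[t] = polynomials in t₁, t₂, …; variable n stands for t_{n+1}. -/
abbrev Zt : Type := MvPolynomial ℕ ℤ

/-- The embedding ℤ[t] → ℤ[c,t]. -/
def tEmbed : Zt →+* P :=
  (MvPolynomial.aeval (fun n : ℕ => (MvPolynomial.X (Sum.inr (n+1)) : P))).toRingHom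

/-- α ↦ α + r·ε_j. -/
def addAt (α : ℕ → ℤ) (j : ℕ) (r : ℤ) : ℕ → ℤ := fun m => α m + if m = j then r else 0

def epsSeq (j : ℕ) : ℕ → ℤ := fun m => if m = j then 1 else 0

/-- The sequence (λ_1,…,λ_{j-1}, r, s, μ_{j+2},…) with prescribed entries r, s at j, j+1. -/
def twoSet (ν : ℕ → ℤ) (j : ℕ) (r s : ℤ) : ℕ → ℤ :=
  fun m => if m = j then r else if m = j+1 then s else ν m

/-- Pairs (i,j) with 1 ≤ i < j ≤ ℓ. -/
def BddPairs (ℓ : ℕ) : Set (ℕ × ℕ) := {p | 1 ≤ p.1 ∧ p.1 < p.2 ∧ p.2 ≤ ℓ}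

/-- Boxes [r,c] and [r',c'] are k-related: |c-k-1| + r = |c'-k-1| + r'. -/
def kRel (k : ℕ) (r c r' c' : ℤ) : Prop :=
  |c - (k:ℤ) - 1| + r = |c' - (k:ℤ) - 1| + r'

/-- Case (i) of λ → μ: μ is obtained from λ by adding a single box (in some row h). -/
def ArrowBox (lam μ : ℕ → ℤ) : Prop :=
  ∃ h : ℕ, 1 ≤ h ∧ ∀ m, μ m = lam m + if m = h then 1 else 0

/-- Case (ii) of λ → μ: remove r boxes from a column c ≤ k of λ (giving ν) and add r+1
boxes to a single row h of ν, so that the removed boxes and the bottom box of μ in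
column c are each k-related to one of the added boxes. -/
def ArrowMove (k : ℕ) (lam μ : ℕ → ℤ) : Prop :=
  ∃ c h r : ℕ, 1 ≤ c ∧ c ≤ k ∧ 1 ≤ h ∧ 1 ≤ r ∧
    ∃ ν : ℕ → ℤ, IsPartition ν ∧
      ∃ S : Finset ℕ, S.card = r ∧
        (∀ x ∈ S, 1 ≤ x ∧ lam x = (c:ℤ) ∧ ν x = (c:ℤ) - 1) ∧
        (∀ x, x ∉ S → ν x = lam x) ∧
        (∀ m, μ m = ν m + if m = h then (r:ℤ) + 1 else 0) ∧
        (∀ x ∈ S, ∃ y : ℤ, ν h + 1 ≤ y ∧ y ≤ ν h + r + 1 ∧ kRel k x c h y) ∧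
        (∀ b : ℕ, 1 ≤ b → (c:ℤ) ≤ μ b → μ (b+1) < (c:ℤ) →
          ∃ y : ℤ, ν h + 1 ≤ y ∧ y ≤ ν h + r + 1 ∧ kRel k b c h y)

/-- λ → μ for k-strict partitions. -/
def ChevArrow (k : ℕ) (lam μ : ℕ → ℤ) : Prop :=
  IsKStrict k μ ∧ (ArrowBox lam μ ∨ ArrowMove k lam μ)

/-- The Chevalley coefficient e_{λμ}: 2 iff μ ⊃ λ with added box neither in column k+1
nor k-related to a bottom box in one of the first k columns of λ; 1 otherwise. -/
def eCoeff (k : ℕ) (lam μ : ℕ → ℤ) : ℤ :=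
  if ∃ h : ℕ, 1 ≤ h ∧ (∀ m, μ m = lam m + if m = h then 1 else 0) ∧
      lam h + 1 ≠ (k:ℤ) + 1 ∧
      ¬ ∃ c x : ℕ, 1 ≤ c ∧ c ≤ k ∧ 1 ≤ x ∧ (c:ℤ) ≤ lam x ∧ lam (x+1) < (c:ℤ) ∧
          kRel k x c h (lam h + 1)
  then 2 else 1

/-- Correspondence between k-strict partitions contained in the (n-k)×(n+k) rectangle and
k-Grassmannian elements of W_n (one-line notation w : ℕ → ℤ on indices 1..n). -/
def GrassCorrespond (k n : ℕ) (w : ℕ → ℤ) (lam : ℕ → ℤ) : Prop :=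
  (∀ m, 1 ≤ m → m ≤ n → 1 ≤ (w m).natAbs ∧ (w m).natAbs ≤ n) ∧
  (∀ m m', 1 ≤ m → m ≤ n → 1 ≤ m' → m' ≤ n → (w m).natAbs = (w m').natAbs → m = m') ∧
  (∀ m, 1 ≤ m → m ≤ k → 0 < w m) ∧
  (∀ m, 1 ≤ m → m + 1 ≤ k → w m < w (m+1)) ∧
  (∀ m, k + 1 ≤ m → m + 1 ≤ n → w m < w (m+1)) ∧
  (∀ i, 1 ≤ i → k + i ≤ n →
    (w (k+i) < 0 → lam i = (k:ℤ) + ((w (k+i)).natAbs : ℤ)) ∧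
    (0 < w (k+i) → lam i = (((Finset.Icc 1 k).filter (fun p => w (k+i) < w p)).card : ℤ))) ∧
  (∀ i, n - k < i → lam i = 0)

/-- The simple reflection s_i acting on the values ±1, …, ±n of signed permutations. -/
def sRefl (i : ℕ) (x : ℤ) : ℤ :=
  if i = 0 then (if x = 1 then -1 else if x = -1 then 1 else x)
  else if x = (i:ℤ) then (i:ℤ)+1
  else if x = (i:ℤ)+1 then (i:ℤ)
  else if x = -(i:ℤ) then -((i:ℤ)+1)
  else if x = -((i:ℤ)+1) then -(i:ℤ)
  else x

/-- Images of the variables under the automorphism s_i of ℤ[c,t]. -/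
def sImage (i : ℕ) : (ℕ ⊕ ℕ) → P
  | Sum.inl p =>
      if i = 0 then
        (if p = 0 then MvPolynomial.X (Sum.inl 0) else
          cvar (p:ℤ) + 2 * ∑ j ∈ Finset.Icc 1 p, (negT 1)^j * cvar ((p:ℤ) - (j:ℤ)))
      else MvPolynomial.X (Sum.inl p)
  | Sum.inr m =>
      if i = 0 then (if m = 1 then negT 1 else MvPolynomial.X (Sum.inr m))
      else if m = i then MvPolynomial.X (Sum.inr (i+1))
      else if m = i+1 then MvPolynomial.X (Sum.inr i)
      else MvPolynomial.X (Sum.inr m)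

/-- The ring endomorphism s_i of ℤ[c,t]. -/
def sAut (i : ℕ) : P →+* P := (MvPolynomial.aeval (sImage i)).toRingHom

/-- Denominator of the divided difference ∂_i: 2t₁ for i = 0, t_{i+1} - t_i for i ≥ 1. -/
def dden (i : ℕ) : P :=
  if i = 0 then 2 * MvPolynomial.X (Sum.inr 1)
  else MvPolynomial.X (Sum.inr (i+1)) - MvPolynomial.X (Sum.inr i)

/-- The divided difference operator ∂_i: the (unique, since P is a domain) quotient
(f - s_i f)/(denominator) whenever the division is exact. -/
def ddiff (i : ℕ) (f : P) : P :=
  if h : ∃ g : P, f - sAut i f = dden i * g then h.choose else 0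

/-! The operator `R^D` factors as `(1 - R_{j,j+1}) · R'`, and since rows `j`, `j + 1` of `D` are
empty while its columns `j`, `j + 1` agree, `R'` is invariant under the transposition `σ` of
`j` and `j + 1`. Hence the term of `T(D, (λ, s - 1, r + 1, μ))` with raising exponents `n` is
minus the term of `T(D, (λ, r, s, μ))` with exponents `σ · n`, the exponent `e ∈ {0, 1}` of
`R_{j,j+1}` replaced by `1 - e`; the superscripts agree because `a_{j+1}(D) = a_j(D) + 1`.
For `r = λ_j`, `s = λ_j + 1` both sides are `T(D, λ)`, so `T(D, λ) = -T(D, λ) = 0`. -/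

open Finsupp

/-- Normalising the factor at exponent `0` to `1` lets the product split off a single pair. -/
lemma roCoeff_eq_prod (A B : Set (ℕ × ℕ)) (n : (ℕ × ℕ) →₀ ℕ) :
    roCoeff A B n = n.prod fun p m => if m = 0 then 1 else pairCoeff (p ∈ A) (p ∈ B) m :=
  prod_congr fun _ hp => by rw [if_neg (mem_support_iff.mp hp)]

lemma roCoeff_eq_zero {A B : Set (ℕ × ℕ)} {n : (ℕ × ℕ) →₀ ℕ} {p : ℕ × ℕ} (hp : n p ≠ 0)
    (h : pairCoeff (p ∈ A) (p ∈ B) (n p) = 0) : roCoeff A B n = 0 :=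
  Finset.prod_eq_zero (mem_support_iff.mpr hp) h

def raiseDelta (p : ℕ × ℕ) (m : ℕ) : ℤ :=
  (if p.1 = m then 1 else 0) - (if p.2 = m then 1 else 0)

lemma raiseSeq_eq_add_sum (n : (ℕ × ℕ) →₀ ℕ) (α : ℕ → ℤ) (m : ℕ) :
    raiseSeq n α m = α m + n.sum fun p c => (c : ℤ) * raiseDelta p m :=
  rfl

lemma cmon_comp_perm (e : Equiv.Perm ℕ) (β α : ℕ → ℤ) : cmon (β ∘ e) (α ∘ e) = cmon β α :=
  finprod_comp_equiv e (f := fun i => cc (β i) (α i))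

lemma twoSet_self (ν : ℕ → ℤ) (j : ℕ) : twoSet ν j (ν j) (ν (j + 1)) = ν := by
  funext m
  unfold twoSet
  split_ifs <;> simp_all

section RowTransposition

variable {j : ℕ} {D : Set (ℕ × ℕ)}

/-- `σ × σ` on pairs, except that `(j, j + 1)` and `(j + 1, j)` are fixed rather than exchanged. -/
def pairSwap (j : ℕ) : Equiv.Perm (ℕ × ℕ) :=
  (Equiv.swap (j, j + 1) (j + 1, j)).trans
    ((Equiv.swap j (j + 1)).prodCongr (Equiv.swap j (j + 1)))

lemma pairSwap_apply_of_ne {p : ℕ × ℕ} (hx : p ≠ (j, j + 1)) (hy : p ≠ (j + 1, j)) :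
    pairSwap j p = (Equiv.swap j (j + 1) p.1, Equiv.swap j (j + 1) p.2) := by
  simp [pairSwap, Equiv.swap_apply_of_ne_of_ne hx hy, Prod.map]

@[simp]
lemma pairSwap_apply_self : pairSwap j (j, j + 1) = (j, j + 1) := by
  simp [pairSwap]

@[simp]
lemma pairSwap_apply_swap : pairSwap j (j + 1, j) = (j + 1, j) := by
  simp [pairSwap]

lemma pairSwap_involutive : Function.Involutive (pairSwap j) := by
  rintro ⟨a, b⟩
  by_cases hx : (a, b) = (j, j + 1); · simp [hx]
  by_cases hy : (a, b) = (j + 1, j); · simp [hy]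
  rw [pairSwap_apply_of_ne hx hy, pairSwap_apply_of_ne] <;>
    simp_all [Equiv.swap_apply_eq_iff]

lemma pairSwap_symm : (pairSwap j).symm = pairSwap j :=
  pairSwap_involutive.symm_eq_self_of_involutive

lemma pairSwap_ne_self {p : ℕ × ℕ} (hp : p ≠ (j, j + 1)) : pairSwap j p ≠ (j, j + 1) := by
  simpa using (pairSwap j).injective.ne hp

lemma pairSwap_mem_upper_iff (hj : 1 ≤ j) (p : ℕ × ℕ) : pairSwap j p ∈ Upper ↔ p ∈ Upper := by
  by_cases hx : p = (j, j + 1); · simp [hx]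
  by_cases hy : p = (j + 1, j); · simp [hy]
  obtain ⟨a, b⟩ := p
  simp only [pairSwap_apply_of_ne hx hy, Upper, Set.mem_ofPred_eq, Equiv.swap_apply_def]
  simp only [Prod.mk.injEq, not_and] at hx hy
  split_ifs <;> omega

lemma fst_lt_of_mem (hD : ValidPairs D) (hj : 1 ≤ j) (hnot : (j, j + 1) ∉ D) {p : ℕ × ℕ}
    (hp : p ∈ D) : p.1 < j := by
  by_contra! hjp
  exact hnot (hD.2.2 p hp _ ⟨hj, j.lt_succ_self⟩ hjp (by have := (hD.1 hp).2; omega))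

lemma mem_of_pairSwap_mem (hD : ValidPairs D) (hj : 1 ≤ j) (hnot : (j, j + 1) ∉ D)
    (hcol : ∀ h, 1 ≤ h → h < j → ((h, j) ∈ D ↔ (h, j + 1) ∈ D)) {p : ℕ × ℕ}
    (h : pairSwap j p ∈ D) : p ∈ D := by
  by_cases hx : p = (j, j + 1); · simpa [hx] using h
  by_cases hy : p = (j + 1, j); · simpa [hy] using h
  obtain ⟨a, b⟩ := p
  rw [pairSwap_apply_of_ne hx hy] at h
  have ha := fst_lt_of_mem hD hj hnot h
  have hU := hD.1 h
  rw [Equiv.swap_apply_of_ne_of_ne (by rintro rfl; simp at ha)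
    (by rintro rfl; simp at ha)] at h ha hU
  rcases eq_or_ne b j with rfl | hb
  · exact (hcol a hU.1 ha).mpr (by simpa using h)
  rcases eq_or_ne b (j + 1) with rfl | hb'
  · exact (hcol a hU.1 ha).mp (by simpa using h)
  simpa [Equiv.swap_apply_of_ne_of_ne hb hb'] using h

lemma pairSwap_mem_iff (hD : ValidPairs D) (hj : 1 ≤ j) (hnot : (j, j + 1) ∉ D)
    (hcol : ∀ h, 1 ≤ h → h < j → ((h, j) ∈ D ↔ (h, j + 1) ∈ D)) (p : ℕ × ℕ) :
    pairSwap j p ∈ D ↔ p ∈ D :=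
  ⟨mem_of_pairSwap_mem hD hj hnot hcol,
    fun h => mem_of_pairSwap_mem hD hj hnot hcol (by rwa [pairSwap_involutive p])⟩

/-- The involution `n ↦ σ · n` of raising exponents, with the exponent of `R_{j,j+1}` changed by
`0 ↔ 1`; larger exponents of `R_{j,j+1}` carry coefficient `0` since `(j, j + 1) ∉ D`. -/
def swapExponents (j : ℕ) (n : (ℕ × ℕ) →₀ ℕ) : (ℕ × ℕ) →₀ ℕ :=
  (equivMapDomain (pairSwap j) n).update (j, j + 1) (Equiv.swap 0 1 (n (j, j + 1)))

@[simp]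
lemma swapExponents_apply_self (n : (ℕ × ℕ) →₀ ℕ) :
    swapExponents j n (j, j + 1) = Equiv.swap 0 1 (n (j, j + 1)) := by
  simp [swapExponents]

lemma swapExponents_apply_of_ne (n : (ℕ × ℕ) →₀ ℕ) {p : ℕ × ℕ} (hp : p ≠ (j, j + 1)) :
    swapExponents j n p = n (pairSwap j p) := by
  simp [swapExponents, update_apply, hp, pairSwap_symm]

lemma swapExponents_involutive : Function.Involutive (swapExponents j) := by
  intro n
  ext p
  by_cases hp : p = (j, j + 1)
  · simp [hp]
  · rw [swapExponents_apply_of_ne _ hp, swapExponents_apply_of_ne _ (pairSwap_ne_self hp),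
      pairSwap_involutive]

lemma erase_swapExponents (n : (ℕ × ℕ) →₀ ℕ) :
    (swapExponents j n).erase (j, j + 1) = equivMapDomain (pairSwap j) (n.erase (j, j + 1)) := by
  ext p
  by_cases hp : p = (j, j + 1)
  · simp [hp, pairSwap_symm]
  · simp [erase_ne hp, swapExponents_apply_of_ne _ hp, pairSwap_symm, pairSwap_ne_self hp]

lemma roCoeff_swapExponents (hD : ValidPairs D) (hj : 1 ≤ j) (hnot : (j, j + 1) ∉ D)
    (hcol : ∀ h, 1 ≤ h → h < j → ((h, j) ∈ D ↔ (h, j + 1) ∈ D)) (n : (ℕ × ℕ) →₀ ℕ) :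
    roCoeff Upper D (swapExponents j n) = -roCoeff Upper D n := by
  rw [roCoeff_eq_prod, roCoeff_eq_prod, ← mul_prod_erase' _ (j, j + 1) _ (by simp),
    ← mul_prod_erase' n (j, j + 1) _ (by simp), erase_swapExponents, prod_equivMapDomain,
    swapExponents_apply_self]
  simp only [pairSwap_mem_upper_iff hj, pairSwap_mem_iff hD hj hnot hcol]
  have hx : (j, j + 1) ∈ Upper := ⟨hj, j.lt_succ_self⟩
  rcases n (j, j + 1) with _ | _ | m <;>
    simp [pairCoeff, hx, hnot, Equiv.swap_apply_of_ne_of_ne]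

lemma raiseDelta_pairSwap {p : ℕ × ℕ} (hx : p ≠ (j, j + 1)) (hy : p ≠ (j + 1, j)) (m : ℕ) :
    raiseDelta (pairSwap j p) m = raiseDelta p (Equiv.swap j (j + 1) m) := by
  simp [pairSwap_apply_of_ne hx hy, raiseDelta, Equiv.swap_apply_eq_iff]

lemma raiseDelta_self_swap (m : ℕ) :
    raiseDelta (j, j + 1) (Equiv.swap j (j + 1) m) = -raiseDelta (j, j + 1) m := by
  simp only [raiseDelta, Equiv.swap_apply_def]
  split_ifs <;> omega

lemma sum_swapExponents {n : (ℕ × ℕ) →₀ ℕ} (hy : n (j + 1, j) = 0) (hx : n (j, j + 1) ≤ 1)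
    (m : ℕ) :
    ((swapExponents j n).sum fun p c => (c : ℤ) * raiseDelta p m)
      = (n.sum fun p c => (c : ℤ) * raiseDelta p (Equiv.swap j (j + 1) m))
        + raiseDelta (j, j + 1) m := by
  rw [← add_sum_erase' _ (j, j + 1) _ (by simp), ← add_sum_erase' n (j, j + 1) _ (by simp),
    erase_swapExponents, sum_equivMapDomain, swapExponents_apply_self, raiseDelta_self_swap]
  have hrest : ((n.erase (j, j + 1)).sum fun p c => (c : ℤ) * raiseDelta (pairSwap j p) m)
      = (n.erase (j, j + 1)).sum fun p c => (c : ℤ) * raiseDelta p (Equiv.swap j (j + 1) m) := by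
    refine sum_congr fun p hp => ?_
    have hpx : p ≠ (j, j + 1) := by rintro rfl; simp at hp
    have hpy : p ≠ (j + 1, j) := by rintro rfl; simp [hy] at hp
    rw [raiseDelta_pairSwap hpx hpy]
  rw [hrest]
  interval_cases n (j, j + 1) <;> simp [add_comm]

lemma twoSet_swap_apply (ν : ℕ → ℤ) (r s : ℤ) (m : ℕ) :
    twoSet ν j (s - 1) (r + 1) (Equiv.swap j (j + 1) m)
      = twoSet ν j r s m + raiseDelta (j, j + 1) m := by
  simp only [twoSet, raiseDelta, Equiv.swap_apply_def]
  split_ifs <;> omega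

lemma raiseSeq_swapExponents {n : (ℕ × ℕ) →₀ ℕ} (hy : n (j + 1, j) = 0)
    (hx : n (j, j + 1) ≤ 1) (ν : ℕ → ℤ) (r s : ℤ) (m : ℕ) :
    raiseSeq (swapExponents j n) (twoSet ν j r s) m
      = raiseSeq n (twoSet ν j (s - 1) (r + 1)) (Equiv.swap j (j + 1) m) := by
  rw [raiseSeq_eq_add_sum, raiseSeq_eq_add_sum, sum_swapExponents hy hx, twoSet_swap_apply]
  ring

lemma aD_succ (hj : 1 ≤ j) (hnot : (j, j + 1) ∉ D)
    (hcol : ∀ h, 1 ≤ h → h < j → ((h, j) ∈ D ↔ (h, j + 1) ∈ D)) :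
    aD D (j + 1) = aD D j + 1 := by
  have hfilter : (Finset.Ico 1 j).filter (fun i => (i, j + 1) ∉ D)
      = (Finset.Ico 1 j).filter (fun i => (i, j) ∉ D) :=
    Finset.filter_congr fun i hi => by
      rw [Finset.mem_Ico] at hi
      rw [hcol i hi.1 hi.2]
  rw [aD, aD, Nat.Ico_succ_right_eq_insert_Ico hj, Finset.filter_insert, if_pos hnot,
    Finset.card_insert_of_notMem (by simp), hfilter]

lemma gammaSeq_twoSet_swap (k : ℕ) (hj : 1 ≤ j) (hnot : (j, j + 1) ∉ D)
    (hcol : ∀ h, 1 ≤ h → h < j → ((h, j) ∈ D ↔ (h, j + 1) ∈ D)) (ν : ℕ → ℤ) (r s : ℤ) :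
    gammaSeq k D (twoSet ν j (s - 1) (r + 1))
      = gammaSeq k D (twoSet ν j r s) ∘ Equiv.swap j (j + 1) := by
  funext m
  have hsucc := aD_succ hj hnot hcol
  simp only [gammaSeq, twoSet, Function.comp_apply, Equiv.swap_apply_def]
  split_ifs <;> subst_vars <;> omega

lemma term_swapExponents (k : ℕ) (hD : ValidPairs D) (hj : 1 ≤ j) (hnot : (j, j + 1) ∉ D)
    (hcol : ∀ h, 1 ≤ h → h < j → ((h, j) ∈ D ↔ (h, j + 1) ∈ D)) (ν : ℕ → ℤ) (r s : ℤ)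
    (n : (ℕ × ℕ) →₀ ℕ) :
    roCoeff Upper D n • cmon (gammaSeq k D (twoSet ν j (s - 1) (r + 1)))
        (raiseSeq n (twoSet ν j (s - 1) (r + 1)))
      = -(roCoeff Upper D (swapExponents j n) • cmon (gammaSeq k D (twoSet ν j r s))
          (raiseSeq (swapExponents j n) (twoSet ν j r s))) := by
  rw [roCoeff_swapExponents hD hj hnot hcol, neg_smul, neg_neg]
  by_cases h0 : roCoeff Upper D n = 0
  · simp [h0]
  have hy : n (j + 1, j) = 0 := by
    have hyD : (j + 1, j) ∉ D := fun h => by simpa using (hD.1 h).2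
    by_contra hy
    exact h0 (roCoeff_eq_zero hy (by simp [pairCoeff, Upper, hyD]))
  have hx : n (j, j + 1) ≤ 1 := by
    by_contra! hx
    exact h0 (roCoeff_eq_zero (p := (j, j + 1)) (by omega)
      (by simp [pairCoeff, hnot, hx.not_ge]))
  have hraise : raiseSeq n (twoSet ν j (s - 1) (r + 1))
      = raiseSeq (swapExponents j n) (twoSet ν j r s) ∘ Equiv.swap j (j + 1) := by
    funext m
    rw [Function.comp_apply, raiseSeq_swapExponents hy hx, Equiv.swap_apply_self]
  rw [gammaSeq_twoSet_swap k hj hnot hcol, hraise, cmon_comp_perm]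

lemma Tpol_twoSet_swap (k : ℕ) (hD : ValidPairs D) (hj : 1 ≤ j) (hnot : (j, j + 1) ∉ D)
    (hcol : ∀ h, 1 ≤ h → h < j → ((h, j) ∈ D ↔ (h, j + 1) ∈ D)) (ν : ℕ → ℤ) (r s : ℤ) :
    Tpol k D (twoSet ν j (s - 1) (r + 1)) = -Tpol k D (twoSet ν j r s) := by
  rw [Tpol, Tpol, applyRO, applyRO, finsum_congr (term_swapExponents k hD hj hnot hcol ν r s),
    finsum_neg_distrib]
  exact congrArg _ (finsum_comp_equiv (swapExponents_involutive.toPerm _)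
    (f := fun n => roCoeff Upper D n • cmon (gammaSeq k D (twoSet ν j r s))
      (raiseSeq n (twoSet ν j r s))))

end RowTransposition

theorem stmt3_general (k j : ℕ) (hj : 1 ≤ j) (D : Set (ℕ × ℕ)) (hD : ValidPairs D)
    (hnot : (j, j + 1) ∉ D)
    (hcol : ∀ h, 1 ≤ h → h < j → ((h, j) ∈ D ↔ (h, j + 1) ∈ D))
    (ν : ℕ → ℤ) :
    (∀ r s : ℤ, Tpol k D (twoSet ν j r s) = - Tpol k D (twoSet ν j (s - 1) (r + 1))) ∧
    (ν (j + 1) = ν j + 1 → Tpol k D ν = 0) := by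
  have hswap := Tpol_twoSet_swap k hD hj hnot hcol ν
  refine ⟨fun r s => by rw [hswap, neg_neg], fun hν => ?_⟩
  have hself := hswap (ν j) (ν (j + 1))
  rw [hν, add_sub_cancel_right, ← hν, twoSet_self] at hself
  exact self_eq_neg.mp hself

theorem stmt3 (k j : ℕ) (hj : 1 ≤ j) (D : Set (ℕ × ℕ)) (hD : ValidPairs D)
    (hnot : (j, j + 1) ∉ D)
    (hcol : ∀ h, 1 ≤ h → h < j → ((h, j) ∈ D ↔ (h, j + 1) ∈ D))
    (ν : ℕ → ℤ) (hν0 : ν 0 = 0) (hfin : FinSupp ν) :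
    (∀ r s : ℤ, Tpol k D (twoSet ν j r s) = - Tpol k D (twoSet ν j (s - 1) (r + 1))) ∧
    (ν (j + 1) = ν j + 1 → Tpol k D ν = 0) :=
  stmt3_general k j hj D hD hnot hcol ν

end
end

section
/- Let p > k and q > k be integers. Then in the ring C^{(k)}[t] (i.e. modulo the ideal generated by I^{(k)} in ℤ[c,t]) one has ((1−R_{12})/(1+R_{12})) c^{(k+1−p, k+1−q)}_{(p,q)} = − ((1−R_{12})/(1+R_{12})) c^{(k+1−q, k+1−p)}_{(q,p)}, where (1−R_{12})/(1+R_{12}) := (1−R_{12}) Σ_{m≥0} (−R_{12})^m acts on pairs as described. -/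
open scoped Classical

noncomputable section

/-!
Write `p = k+1+a`, `q = k+1+b` and `c^{-a}(z) = c(z) E_a(z)` with `E_a(z) = ∏_{i ≤ a} (1 - t_i z)`
of degree `a`. Since `(1 - R)/(1 + R) = 1 + ∑_{m ≥ 1} 2 (-1)^m R^m`, the sum of the two sides
collapses to `2 (-1)^p ∑_n (-1)^n c^{-a}_n c^{-b}_{p+q-n}`, the coefficient of `z^{p+q}` in
`c(-z) c(z) · E_a(-z) E_b(z)`. The second factor has degree at most `a + b`, so only coefficients
of `c(-z) c(z)` in degrees `> 2k` contribute; these vanish in odd degree and are `±` the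
generator of `I^{(k)}` of index `s` in degree `2s`.
-/

open PowerSeries Finset

theorem neg_one_pow_sub_of_le {R : Type*} [Monoid R] [HasDistribNeg R] {n i : ℕ} (h : i ≤ n) :
    (-1 : R) ^ (n - i) = (-1) ^ n * (-1) ^ i := by
  calc (-1 : R) ^ (n - i) = (-1) ^ (n - i) * ((-1) ^ i * (-1) ^ i) := by
        rw [← pow_add, ← two_mul, pow_mul, neg_one_sq, one_pow, mul_one]
    _ = (-1) ^ n * (-1) ^ i := by rw [← mul_assoc, ← pow_add, Nat.sub_add_cancel h]

theorem Finset.sum_range_two_mul_add_one_of_symm {M : Type*} [AddCommMonoid M] (a : ℕ → M)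
    (s : ℕ) (h : ∀ i ≤ 2 * s, a (2 * s - i) = a i) :
    ∑ i ∈ range (2 * s + 1), a i = a s + 2 • ∑ i ∈ Icc 1 s, a (s + i) := by
  have hlow : ∑ i ∈ range s, a i = ∑ i ∈ range s, a (s + (i + 1)) := by
    rw [← sum_range_reflect]
    refine sum_congr rfl fun i hi => ?_
    have := mem_range.1 hi
    rw [← h (s - 1 - i) (by omega)]
    congr 1
    omega
  have hhigh : ∑ i ∈ Icc 1 s, a (s + i) = ∑ i ∈ range s, a (s + (i + 1)) := by
    rw [← Ico_add_one_right_eq_Icc, sum_Ico_eq_sum_range, add_tsub_cancel_right]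
    exact sum_congr rfl fun i _ => by rw [add_comm 1 i]
  rw [show 2 * s + 1 = s + (s + 1) by ring, sum_range_add, sum_range_succ', hlow, hhigh,
    add_zero, two_nsmul]
  abel

namespace PowerSeries

variable {R : Type*} [CommRing R]

theorem coeff_mul_eq_zero_of_lt {f g : R⟦X⟧} {a b N : ℕ} (hf : ∀ n, a < n → coeff n f = 0)
    (hg : ∀ n, b < n → coeff n g = 0) (hN : a + b < N) : coeff N (f * g) = 0 := by
  rw [coeff_mul]
  refine sum_eq_zero fun x hx => ?_
  rw [HasAntidiagonal.mem_antidiagonal] at hx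
  rcases lt_or_ge a x.1 with h | h
  · rw [hf _ h, zero_mul]
  · rw [hg _ (by omega), mul_zero]

theorem coeff_mul_mem_of_le {I : Ideal R} {f g : R⟦X⟧} {m d N : ℕ}
    (hf : ∀ n, m ≤ n → coeff n f ∈ I) (hg : ∀ n, d < n → coeff n g = 0) (hN : m + d ≤ N) :
    coeff N (f * g) ∈ I := by
  rw [coeff_mul]
  refine I.sum_mem fun x hx => ?_
  rw [HasAntidiagonal.mem_antidiagonal] at hx
  rcases le_or_gt m x.1 with h | h
  · exact I.mul_mem_right _ (hf _ h)
  · rw [hg _ (by omega), mul_zero]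
    exact I.zero_mem

theorem coeff_rescale_neg_one_mul_self_of_odd [IsAddTorsionFree R] (f : R⟦X⟧) {n : ℕ}
    (hn : Odd n) : coeff n (rescale (-1) f * f) = 0 := by
  have hinv : rescale (-1 : R) (rescale (-1) f * f) = rescale (-1) f * f := by
    rw [map_mul, rescale_rescale, neg_one_mul, neg_neg, rescale_one, mul_comm]
    rfl
  have := congrArg (coeff n) hinv
  rw [coeff_rescale, hn.neg_one_pow, neg_one_mul] at this
  exact neg_eq_self.1 this

theorem coeff_rescale_neg_one_mul_self_two_mul (f : R⟦X⟧) (s : ℕ) :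
    coeff (2 * s) (rescale (-1) f * f) = (-1) ^ s * (coeff s f * coeff s f
      + 2 * ∑ i ∈ Icc 1 s, (-1) ^ i * (coeff (s + i) f * coeff (s - i) f)) := by
  rw [coeff_mul, Nat.sum_antidiagonal_eq_sum_range_succ_mk]
  simp only [coeff_rescale]
  rw [sum_range_two_mul_add_one_of_symm _ s fun i hi => ?symm, two_mul s, Nat.add_sub_cancel,
    nsmul_eq_mul, Nat.cast_ofNat, mul_sum, mul_add, mul_sum, mul_sum]
  · congr 1
    · ring
    refine sum_congr rfl fun i _ => ?_
    rw [show s + s - (s + i) = s - i by omega, pow_add]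
    ring
  · rw [neg_one_pow_sub_of_le hi, Nat.sub_sub_self hi, pow_mul, neg_one_sq, one_pow, one_mul]
    ring

end PowerSeries

theorem cvar_of_neg {x : ℤ} (h : x < 0) : cvar x = 0 := by
  simp [cvar, h, h.ne]

theorem cc_of_neg (r : ℤ) {x : ℤ} (h : x < 0) : cc r x = 0 := by
  simp [cc, Int.toNat_of_nonpos h.le, cvar_of_neg h]

theorem hNT_zero (r : ℤ) : hNT r 0 = 1 := by
  rw [hNT, if_neg (lt_irrefl 0)]
  split_ifs
  · simp [hsymNT, Finset.sym_zero]
    rfl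
  · simp [esymNT]

theorem cc_zero (r : ℤ) : cc r 0 = 1 := by
  simp [cc, cvar, hNT_zero]

theorem hNT_neg_eq_zero {a j : ℕ} (h : a < j) : hNT (-(a : ℤ)) j = 0 := by
  rcases Nat.eq_zero_or_pos a with rfl | ha
  · obtain ⟨j, rfl⟩ : ∃ j', j = j' + 1 := ⟨j - 1, by omega⟩
    simp [hNT, hsymNT]
  · rw [hNT, if_neg (by omega), if_neg (by omega)]
    simp only [esymNT, neg_neg, Int.toNat_natCast]
    rw [powersetCard_eq_empty.2 (by rw [Nat.card_Icc]; omega), sum_empty]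

def cSeries : P⟦X⟧ := mk fun n => cvar n

def hSeries (r : ℤ) : P⟦X⟧ := mk fun j => hNT r j

theorem coeff_cSeries_mul_hSeries (r : ℤ) (n : ℕ) : coeff n (cSeries * hSeries r) = cc r n := by
  rw [mul_comm, coeff_mul, Nat.sum_antidiagonal_eq_sum_range_succ_mk, cc, Int.toNat_natCast]
  refine sum_congr rfl fun j hj => ?_
  rw [cSeries, hSeries, coeff_mk, coeff_mk, Nat.cast_sub (by simpa [Nat.lt_succ_iff] using hj),
    mul_comm]

theorem coeff_hSeries_neg_eq_zero {a j : ℕ} (h : a < j) : coeff j (hSeries (-a)) = 0 := by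
  rw [hSeries, coeff_mk, hNT_neg_eq_zero h]

theorem coeff_rescale_cSeries_mul_cSeries_mem {k M : ℕ} (hM : 2 * k < M) :
    coeff M (rescale (-1) cSeries * cSeries) ∈ Ik k := by
  rcases Nat.even_or_odd' M with ⟨s, rfl | rfl⟩
  · have hsum : ∑ i ∈ Icc 1 s, (-1) ^ i * (coeff (s + i) cSeries * coeff (s - i) cSeries)
        = ∑ i ∈ Icc 1 s, (-1 : P) ^ i * (cvar ((s : ℤ) + i) * cvar ((s : ℤ) - i)) := by
      refine sum_congr rfl fun i hi => ?_
      rw [cSeries, coeff_mk, coeff_mk, Nat.cast_add, Nat.cast_sub (mem_Icc.1 hi).2]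
    rw [coeff_rescale_neg_one_mul_self_two_mul, hsum, cSeries, coeff_mk]
    exact Ideal.mul_mem_left _ _ (Ideal.subset_span ⟨s, by omega, rfl⟩)
  · rw [coeff_rescale_neg_one_mul_self_of_odd _ (odd_two_mul_add_one s)]
    exact Ideal.zero_mem _

theorem alternating_sum_cc_mul_cc_mem (k a b N : ℕ) (hN : 2 * k + 1 + a + b ≤ N) :
    ∑ n ∈ range (N + 1), (-1) ^ n * (cc (-(a : ℤ)) n * cc (-(b : ℤ)) ((N : ℤ) - n)) ∈ Ik k := by
  have hcoeff : ∑ n ∈ range (N + 1), (-1) ^ n * (cc (-(a : ℤ)) n * cc (-(b : ℤ)) ((N : ℤ) - n))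
      = coeff N (rescale (-1) (cSeries * hSeries (-a)) * (cSeries * hSeries (-b))) := by
    rw [coeff_mul, Nat.sum_antidiagonal_eq_sum_range_succ_mk]
    refine sum_congr rfl fun n hn => ?_
    rw [coeff_rescale, coeff_cSeries_mul_hSeries, coeff_cSeries_mul_hSeries,
      Nat.cast_sub (by simpa [Nat.lt_succ_iff] using hn), mul_assoc]
  rw [hcoeff, map_mul (rescale (-1 : P)), mul_mul_mul_comm]
  refine coeff_mul_mem_of_le (m := 2 * k + 1) (d := a + b)
    (fun n hn => coeff_rescale_cSeries_mul_cSeries_mem (by omega))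
    (fun n hn => coeff_mul_eq_zero_of_lt (a := a) (b := b) ?_
      (fun j hj => coeff_hSeries_neg_eq_zero hj) hn) (by omega)
  intro j hj
  rw [coeff_rescale, coeff_hSeries_neg_eq_zero hj, mul_zero]

/-- The coefficient of `R^m` in `(1 - R) / (1 + R)`. -/
def ratioCoeff (m : ℕ) : ℤ := if m = 0 then 1 else 2 * (-1) ^ m

section RaisingOperators

variable {R : Type*} [CommRing R]

theorem sum_ratioCoeff_smul (x : ℕ → R) (n : ℕ) :
    ∑ m ∈ range (n + 1), ratioCoeff m • x m = 2 * ∑ m ∈ range (n + 1), (-1) ^ m * x m - x 0 := by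
  rw [sum_range_succ', sum_range_succ' (fun m => (-1) ^ m * x m), mul_add, mul_sum]
  simp only [ratioCoeff, Nat.succ_ne_zero, if_false, if_true, zsmul_eq_mul]
  push_cast
  simp only [mul_assoc]
  ring

theorem sum_ratioCoeff_smul_add_reflect (g : ℕ → R) (p q : ℕ) :
    ∑ m ∈ range (q + 1), ratioCoeff m • g (p + m) + ∑ m ∈ range (p + 1), ratioCoeff m • g (p - m)
      = 2 * (-1) ^ p * ∑ n ∈ range (p + q + 1), (-1) ^ n * g n := by
  have hsq : (-1 : R) ^ p * (-1) ^ p = 1 := by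
    rw [← pow_add, ← two_mul, pow_mul, neg_one_sq, one_pow]
  have hupper : ∑ m ∈ range (q + 1), (-1) ^ m * g (p + m)
      = (-1) ^ p * ∑ m ∈ range (q + 1), (-1) ^ (p + m) * g (p + m) := by
    rw [mul_sum]
    refine sum_congr rfl fun m _ => ?_
    rw [pow_add, ← mul_assoc, ← mul_assoc, hsq, one_mul]
  have hlower : ∑ m ∈ range (p + 1), (-1) ^ m * g (p - m)
      = (-1) ^ p * ∑ n ∈ range (p + 1), (-1) ^ n * g n := by
    rw [← sum_range_reflect, mul_sum]
    refine sum_congr rfl fun m hm => ?_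
    have hmp : m ≤ p := Nat.lt_succ_iff.1 (mem_range.1 hm)
    rw [Nat.add_sub_cancel, Nat.sub_sub_self hmp, neg_one_pow_sub_of_le hmp, mul_assoc]
  rw [sum_ratioCoeff_smul, sum_ratioCoeff_smul, hupper, hlower, add_assoc p q 1,
    sum_range_add (fun n => (-1) ^ n * g n) p (q + 1), sum_range_succ (fun n => (-1) ^ n * g n) p]
  simp only [add_zero, Nat.sub_zero]
  linear_combination (2 * g p) * hsq

theorem roCoeff_singleton_single (x : ℕ × ℕ) (m : ℕ) :
    roCoeff {x} {x} (Finsupp.single x m) = ratioCoeff m := by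
  rcases Nat.eq_zero_or_pos m with rfl | hm
  · simp [roCoeff, ratioCoeff]
  · rw [roCoeff, Finsupp.support_single _ hm.ne', prod_singleton, Finsupp.single_eq_same,
      ratioCoeff, if_neg hm.ne', pairCoeff, if_pos (Set.mem_singleton x),
      if_pos (Set.mem_singleton x)]

theorem roCoeff_eq_zero_of_mem_support {A B : Set (ℕ × ℕ)} {n : (ℕ × ℕ) →₀ ℕ} {x : ℕ × ℕ}
    (hx : x ∈ n.support) (hA : x ∉ A) (hB : x ∉ B) : roCoeff A B n = 0 :=
  prod_eq_zero hx (by rw [pairCoeff, if_neg hA, if_neg hB])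

theorem raiseSeq_single_twoSet (ν : ℕ → ℤ) (p q : ℤ) (m : ℕ) :
    raiseSeq (Finsupp.single (1, 2) m) (twoSet ν 1 p q) = twoSet ν 1 (p + m) (q - m) := by
  funext l
  rcases Nat.eq_zero_or_pos m with rfl | hm
  · simp [raiseSeq, twoSet]
  · rw [raiseSeq, Finsupp.support_single _ hm.ne', sum_singleton, Finsupp.single_eq_same]
    simp only [twoSet]
    split_ifs <;> omega

theorem cmon_twoSet_zeroSeq (β : ℕ → ℤ) (r s : ℤ) :
    cmon β (twoSet zeroSeq 1 r s) = cc (β 1) r * cc (β 2) s := by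
  have hsupp : Function.mulSupport (fun i => cc (β i) (twoSet zeroSeq 1 r s i))
      ⊆ ({1, 2} : Finset ℕ) := by
    intro i hi
    by_contra hi'
    simp only [coe_insert, coe_singleton, Set.mem_insert_iff, Set.mem_singleton_iff, not_or] at hi'
    exact hi (by simp [twoSet, zeroSeq, hi'.1, hi'.2, cc_zero])
  rw [cmon, finprod_eq_prod_of_mulSupport_subset _ hsupp, prod_pair (by decide)]
  rfl

theorem applyRO_twoSet_zeroSeq (β : ℕ → ℤ) (p : ℤ) (q : ℕ) :
    applyRO {(1, 2)} {(1, 2)} β (twoSet zeroSeq 1 p q)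
      = ∑ m ∈ range (q + 1), ratioCoeff m • (cc (β 1) (p + m) * cc (β 2) ((q : ℤ) - m)) := by
  have hterm : ∀ m : ℕ, roCoeff {(1, 2)} {(1, 2)} (Finsupp.single (1, 2) m) •
      cmon β (raiseSeq (Finsupp.single (1, 2) m) (twoSet zeroSeq 1 p q))
        = ratioCoeff m • (cc (β 1) (p + m) * cc (β 2) ((q : ℤ) - m)) := fun m => by
    rw [roCoeff_singleton_single, raiseSeq_single_twoSet, cmon_twoSet_zeroSeq]
  have hsupp : Function.support (fun n => roCoeff {(1, 2)} {(1, 2)} n •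
      cmon β (raiseSeq n (twoSet zeroSeq 1 p q)))
        ⊆ ((range (q + 1)).image (Finsupp.single (1, 2)) : Set ((ℕ × ℕ) →₀ ℕ)) := by
    intro n hn
    rw [Function.mem_support] at hn
    by_cases hsub : n.support ⊆ {(1, 2)}
    · obtain ⟨m, rfl⟩ := Finsupp.support_subset_singleton'.1 hsub
      refine mem_image_of_mem _ (mem_range.2 (Nat.lt_succ_of_le (not_lt.1 fun hqm => hn ?_)))
      rw [hterm, cc_of_neg _ (by omega : (q : ℤ) - m < 0), mul_zero, smul_zero]
    · obtain ⟨x, hx, hx12⟩ := not_subset.1 hsub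
      have hx12' : x ∉ ({(1, 2)} : Set (ℕ × ℕ)) := by simpa using hx12
      exact absurd (by rw [roCoeff_eq_zero_of_mem_support hx hx12' hx12', zero_smul]) hn
  rw [applyRO, finsum_eq_sum_of_support_subset _ hsupp,
    sum_image fun _ _ _ _ h => Finsupp.single_injective _ h]
  exact sum_congr rfl fun m _ => hterm m

end RaisingOperators

theorem stmt4 (k : ℕ) (p q : ℤ) (hp : (k : ℤ) < p) (hq : (k : ℤ) < q) :
    Ideal.Quotient.mk (Ik k)
        (applyRO {(1, 2)} {(1, 2)} (twoSet zeroSeq 1 ((k:ℤ)+1-p) ((k:ℤ)+1-q)) (twoSet zeroSeq 1 p q)) =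
      - Ideal.Quotient.mk (Ik k)
        (applyRO {(1, 2)} {(1, 2)} (twoSet zeroSeq 1 ((k:ℤ)+1-q) ((k:ℤ)+1-p)) (twoSet zeroSeq 1 q p)) := by
  obtain ⟨p, rfl⟩ := Int.eq_ofNat_of_zero_le (by omega : 0 ≤ p)
  obtain ⟨q, rfl⟩ := Int.eq_ofNat_of_zero_le (by omega : 0 ≤ q)
  obtain ⟨a, ha⟩ : ∃ a : ℕ, (k : ℤ) + 1 - p = -a := ⟨p - (k + 1), by omega⟩
  obtain ⟨b, hb⟩ : ∃ b : ℕ, (k : ℤ) + 1 - q = -b := ⟨q - (k + 1), by omega⟩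
  rw [eq_neg_iff_add_eq_zero, ← map_add, Ideal.Quotient.eq_zero_iff_mem, applyRO_twoSet_zeroSeq,
    applyRO_twoSet_zeroSeq]
  simp only [twoSet, if_true, if_false, ha, hb, OfNat.ofNat_ne_one, one_add_one_eq_two]
  let g : ℕ → P := fun n => cc (-(a : ℤ)) n * cc (-(b : ℤ)) (((p + q : ℕ) : ℤ) - n)
  have hupper : ∀ m : ℕ, cc (-(a : ℤ)) (p + m) * cc (-(b : ℤ)) ((q : ℤ) - m) = g (p + m) :=
    fun m => by simp only [g, Nat.cast_add, add_sub_add_left_eq_sub]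
  have hlower : ∀ m ∈ range (p + 1),
      cc (-(b : ℤ)) (q + m) * cc (-(a : ℤ)) ((p : ℤ) - m) = g (p - m) := fun m hm => by
    simp only [g]
    rw [Nat.cast_sub (Nat.lt_succ_iff.1 (mem_range.1 hm)), Nat.cast_add, add_sub_sub_cancel,
      mul_comm]
  rw [sum_congr rfl fun m _ => by rw [hupper m],
    sum_congr rfl fun m (hm : m ∈ range (p + 1)) => by rw [hlower m hm],
    sum_ratioCoeff_smul_add_reflect]
  exact Ideal.mul_mem_left _ _ (alternating_sum_cc_mul_cc_mem k a b (p + q) (by omega))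

end
end
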